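/- arXiv:2306.15049 — 4 statements merged into one kernel-verified Lean document; each statement's English description precedes it below -/
import Mathlib

section
/- Under the stated hypotheses, for any γ_a ≥ 0 and γ_b ≥ 0, the A-norm of the solution difference satisfies (x_{γ_a} − x_{γ_b})ᵀ A (x_{γ_a} − x_{γ_b}) = Σ_{j=1}^{N} ( (γ_b − γ_a) μ_j / ((1 + γ_b μ_j)(1 + γ_a μ_j)) )² d̃_j². -/
open Matrix

/-!
Writing `c j = d̃_j / (1 + γ_a μ_j) - d̃_j / (1 + γ_b μ_j)`, the difference `x_{γ_a} - x_{γ_b}`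
is `V c`, and `Vᵀ A V = I` turns its squared `A`-norm into `‖c‖²`; it remains to put each
`c j` over the common denominator.
-/

namespace Matrix

variable {m n R : Type*} [Fintype n] [CommSemiring R]

theorem sum_smul_col_eq_mulVec (V : Matrix m n R) (c : n → R) :
    ∑ j, c j • (fun i => V i j) = V *ᵥ c := by
  ext i
  simp only [Finset.sum_apply, Pi.smul_apply, smul_eq_mul, mulVec, dotProduct, mul_comm]

theorem mulVec_dotProduct_mulVec_mulVec [Fintype m] (V : Matrix m n R) (A : Matrix m m R) (x y : n → R) :
    (V *ᵥ x) ⬝ᵥ (A *ᵥ (V *ᵥ y)) = x ⬝ᵥ ((Vᵀ * A * V) *ᵥ y) := by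
  rw [dotProduct_mulVec, vecMul_mulVec, ← dotProduct_mulVec, mulVec_mulVec, Matrix.mul_assoc]

end Matrix

theorem div_one_add_mul_sub_div_one_add_mul {K : Type*} [Field K] {a b μ d : K}
    (ha : 1 + a * μ ≠ 0) (hb : 1 + b * μ ≠ 0) :
    d / (1 + a * μ) - d / (1 + b * μ) = (b - a) * μ / ((1 + b * μ) * (1 + a * μ)) * d := by
  rw [div_sub_div _ _ ha hb, div_mul_eq_mul_div]
  ring

theorem stmt_6_general (N : ℕ) (A V : Matrix (Fin N) (Fin N) ℝ) (μ : Fin N → ℝ)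
    (hμ : ∀ j, 0 ≤ μ j)
    (hAV : Vᵀ * A * V = 1)
    (b : Fin N → ℝ) (γa γb : ℝ) (hγa : 0 ≤ γa) (hγb : 0 ≤ γb) :
    ((∑ j : Fin N, (((Vᵀ *ᵥ b) j) / (1 + γa * μ j)) • (fun i => V i j))
        - (∑ j : Fin N, (((Vᵀ *ᵥ b) j) / (1 + γb * μ j)) • (fun i => V i j))) ⬝ᵥ
      (A *ᵥ ((∑ j : Fin N, (((Vᵀ *ᵥ b) j) / (1 + γa * μ j)) • (fun i => V i j))
        - (∑ j : Fin N, (((Vᵀ *ᵥ b) j) / (1 + γb * μ j)) • (fun i => V i j))))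
    = ∑ j : Fin N,
        ((γb - γa) * μ j / ((1 + γb * μ j) * (1 + γa * μ j))) ^ 2 * ((Vᵀ *ᵥ b) j) ^ 2 := by
  have hden : ∀ γ : ℝ, 0 ≤ γ → ∀ j, 1 + γ * μ j ≠ 0 := fun γ hγ j => by
    have := hμ j
    positivity
  simp only [sum_smul_col_eq_mulVec]
  rw [← mulVec_sub, mulVec_dotProduct_mulVec_mulVec, hAV, one_mulVec, dotProduct]
  refine Finset.sum_congr rfl fun j _ => ?_
  rw [Pi.sub_apply, div_one_add_mul_sub_div_one_add_mul (hden γa hγa j) (hden γb hγb j)]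
  ring

/-- The squared A-norm of the difference of two shifted solutions equals the sum of
the squared coefficient differences: (x_{γ_a}−x_{γ_b})ᵀ A (x_{γ_a}−x_{γ_b})
= Σ_j ((γ_b−γ_a)μ_j/((1+γ_b μ_j)(1+γ_a μ_j)))² d̃_j². -/
theorem stmt_6 (N : ℕ) (hN : 0 < N) (A E V : Matrix (Fin N) (Fin N) ℝ) (μ : Fin N → ℝ)
    (hA : A.PosDef) (hE : E.PosSemidef) (hμ : ∀ j, 0 ≤ μ j)
    (hV : IsUnit V) (hAV : Vᵀ * A * V = 1) (hEV : Vᵀ * E * V = Matrix.diagonal μ)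
    (b : Fin N → ℝ) (γa γb : ℝ) (hγa : 0 ≤ γa) (hγb : 0 ≤ γb) :
    ((∑ j : Fin N, (((Vᵀ *ᵥ b) j) / (1 + γa * μ j)) • (fun i => V i j))
        - (∑ j : Fin N, (((Vᵀ *ᵥ b) j) / (1 + γb * μ j)) • (fun i => V i j))) ⬝ᵥ
      (A *ᵥ ((∑ j : Fin N, (((Vᵀ *ᵥ b) j) / (1 + γa * μ j)) • (fun i => V i j))
        - (∑ j : Fin N, (((Vᵀ *ᵥ b) j) / (1 + γb * μ j)) • (fun i => V i j))))
    = ∑ j : Fin N,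
        ((γb - γa) * μ j / ((1 + γb * μ j) * (1 + γa * μ j))) ^ 2 * ((Vᵀ *ᵥ b) j) ^ 2 :=
  stmt_6_general N A V μ hμ hAV b γa γb hγa hγb
end

section
/- Let B be a real N×N matrix, K a real N×n_c matrix with KᵀK = I, U a real N×n_c matrix with BU = K, and V a real N×(m+1) matrix with VᵀV = I and KᵀV = 0. Let V_m denote the first m columns of V, W = Kᵀ B V_m, and suppose T is a real (m+1)×m matrix with (I − K Kᵀ) B V_m = V T. Let b ∈ ℝᴺ and ξ ∈ ℝ satisfy (I − K Kᵀ) b = ξ V e₁, where e₁ is the first standard basis vector of ℝ^{m+1}. Then for all z ∈ ℝ^{n_c} and y ∈ ℝᵐ, ‖b − B(U z + V_m y)‖₂² = ‖Kᵀ b − z − W y‖₂² + ‖ξ e₁ − T y‖₂². -/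
open Matrix

lemma aux_dot {N n k : ℕ} (A : Matrix (Fin N) (Fin n) ℝ) (C : Matrix (Fin N) (Fin k) ℝ)
    (x : Fin n → ℝ) (y : Fin k → ℝ) :
    (A *ᵥ x) ⬝ᵥ (C *ᵥ y) = x ⬝ᵥ ((Aᵀ * C) *ᵥ y) := by
  rw [Matrix.dotProduct_mulVec, ← Matrix.mulVec_transpose C, Matrix.mulVec_mulVec,
    Matrix.dotProduct_mulVec x, ← Matrix.mulVec_transpose (Aᵀ * C), Matrix.transpose_mul,
    Matrix.transpose_transpose]

/-- Residual norm splitting for recycling MINRES: with BU = K (KᵀK = I), V an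
orthonormal basis with KᵀV = 0, the Lanczos relation (I−KKᵀ)BV_m = VT, and
(I−KKᵀ)b = ξVe₁, we have for all z, y:
‖b − B(Uz + V_m y)‖₂² = ‖Kᵀb − z − Wy‖₂² + ‖ξe₁ − Ty‖₂² where W = KᵀBV_m. -/
theorem stmt_12 (N nc m : ℕ) (hN : 0 < N) (hnc : 0 < nc) (hm : 0 < m)
    (hdim : nc + m + 1 ≤ N)
    (B : Matrix (Fin N) (Fin N) ℝ)
    (K U : Matrix (Fin N) (Fin nc) ℝ) (hKK : Kᵀ * K = 1) (hBU : B * U = K)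
    (V : Matrix (Fin N) (Fin (m + 1)) ℝ) (hVV : Vᵀ * V = 1) (hKV : Kᵀ * V = 0)
    (T : Matrix (Fin (m + 1)) (Fin m) ℝ)
    (hT : (1 - K * Kᵀ) * (B * V.submatrix id Fin.castSucc) = V * T)
    (b : Fin N → ℝ) (ξ : ℝ)
    (hb : (1 - K * Kᵀ) *ᵥ b = ξ • (V *ᵥ Pi.single 0 1)) :
    ∀ (z : Fin nc → ℝ) (y : Fin m → ℝ),
      (b - B *ᵥ (U *ᵥ z + V.submatrix id Fin.castSucc *ᵥ y)) ⬝ᵥ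
          (b - B *ᵥ (U *ᵥ z + V.submatrix id Fin.castSucc *ᵥ y))
        = (Kᵀ *ᵥ b - z - (Kᵀ * B * V.submatrix id Fin.castSucc) *ᵥ y) ⬝ᵥ
            (Kᵀ *ᵥ b - z - (Kᵀ * B * V.submatrix id Fin.castSucc) *ᵥ y)
          + (ξ • (Pi.single 0 1 : Fin (m + 1) → ℝ) - T *ᵥ y) ⬝ᵥ
            (ξ • (Pi.single 0 1 : Fin (m + 1) → ℝ) - T *ᵥ y) := by
  intro z y
  set Vm := V.submatrix id Fin.castSucc with hVm
  set p : Fin nc → ℝ := Kᵀ *ᵥ b - z - (Kᵀ * B * Vm) *ᵥ y with hp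
  set w : Fin (m + 1) → ℝ := ξ • (Pi.single 0 1 : Fin (m + 1) → ℝ) - T *ᵥ y with hw
  have key : b - B *ᵥ (U *ᵥ z + Vm *ᵥ y) = K *ᵥ p + V *ᵥ w := by
    have h1 : V *ᵥ (T *ᵥ y) = (B * Vm) *ᵥ y - (K * (Kᵀ * B * Vm)) *ᵥ y := by
      have := congrArg (· *ᵥ y) hT
      simp only [Matrix.sub_mul, Matrix.one_mul, Matrix.sub_mulVec, Matrix.mulVec_mulVec] at this ⊢
      rw [← this]
      ring_nf
      rw [Matrix.mul_assoc, Matrix.mul_assoc]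
    have h2 : ξ • (V *ᵥ Pi.single 0 1) = b - (K * Kᵀ) *ᵥ b := by
      rw [← hb, Matrix.sub_mulVec, Matrix.one_mulVec]
    rw [hp, hw]
    simp only [Matrix.mulVec_add, Matrix.mulVec_sub, Matrix.mulVec_smul, Matrix.mulVec_mulVec, h1, h2]
    rw [hBU]
    abel
  rw [key]
  have e1 : (K *ᵥ p) ⬝ᵥ (K *ᵥ p) = p ⬝ᵥ p := by rw [aux_dot, hKK, Matrix.one_mulVec]
  have e2 : (V *ᵥ w) ⬝ᵥ (V *ᵥ w) = w ⬝ᵥ w := by rw [aux_dot, hVV, Matrix.one_mulVec]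
  have e3 : (K *ᵥ p) ⬝ᵥ (V *ᵥ w) = 0 := by rw [aux_dot, hKV, Matrix.zero_mulVec, dotProduct_zero]
  have e4 : (V *ᵥ w) ⬝ᵥ (K *ᵥ p) = 0 := by rw [dotProduct_comm, e3]
  rw [add_dotProduct, dotProduct_add, dotProduct_add, e1, e2, e3, e4]
  ring
end

section
/- Under the stated hypotheses, the minimum of ‖b − B(U z + V_m y)‖₂ over all z ∈ ℝ^{n_c} and y ∈ ℝᵐ equals the minimum of ‖ξ e₁ − T y‖₂ over y ∈ ℝᵐ; moreover, for any y* minimizing ‖ξ e₁ − T y‖₂, the pair (z*, y*) with z* = Kᵀ b − W y* attains the minimum of ‖b − B(U z + V_m y)‖₂. -/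
open Matrix

/-- The Euclidean norm of a vector, ‖v‖₂ = √(v ⬝ᵥ v). -/
noncomputable def norm2 {n : ℕ} (v : Fin n → ℝ) : ℝ := Real.sqrt (v ⬝ᵥ v)

lemma norm2_nonneg {n : ℕ} (v : Fin n → ℝ) : 0 ≤ norm2 v := Real.sqrt_nonneg _

lemma dot_self_nonneg' {n : ℕ} (v : Fin n → ℝ) : 0 ≤ v ⬝ᵥ v :=
  Finset.sum_nonneg fun i _ => mul_self_nonneg _

lemma dot_mv {N p q : ℕ} (A : Matrix (Fin N) (Fin p) ℝ)
    (C : Matrix (Fin N) (Fin q) ℝ) (u : Fin p → ℝ) (w : Fin q → ℝ) :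
    (A *ᵥ u) ⬝ᵥ (C *ᵥ w) = u ⬝ᵥ ((Aᵀ * C) *ᵥ w) := by
  simp [Matrix.dotProduct_mulVec, ← Matrix.vecMul_vecMul, Matrix.vecMul_transpose]

lemma dot_sum {N p q : ℕ} (A : Matrix (Fin N) (Fin p) ℝ)
    (C : Matrix (Fin N) (Fin q) ℝ) (hAA : Aᵀ * A = 1) (hCC : Cᵀ * C = 1)
    (hAC : Aᵀ * C = 0) (u : Fin p → ℝ) (w : Fin q → ℝ) :
    (A *ᵥ u + C *ᵥ w) ⬝ᵥ (A *ᵥ u + C *ᵥ w) = u ⬝ᵥ u + w ⬝ᵥ w := by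
  have hCA : Cᵀ * A = 0 := by
    have := congrArg Matrix.transpose hAC
    simpa [Matrix.transpose_mul] using this
  simp [add_dotProduct, dotProduct_add, dot_mv, hAA, hCC, hAC, hCA,
    Matrix.one_mulVec, Matrix.zero_mulVec, dotProduct_zero]

/-- The minimum of ‖b − B(Uz + V_m y)‖₂ over (z, y) equals the minimum of
‖ξe₁ − Ty‖₂ over y; and for any minimizer y* of the latter, (z*, y*) with
z* = Kᵀb − Wy* attains the former minimum. -/
theorem stmt_13 (N nc m : ℕ) (hN : 0 < N) (hnc : 0 < nc) (hm : 0 < m)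
    (hdim : nc + m + 1 ≤ N)
    (B : Matrix (Fin N) (Fin N) ℝ)
    (K U : Matrix (Fin N) (Fin nc) ℝ) (hKK : Kᵀ * K = 1) (hBU : B * U = K)
    (V : Matrix (Fin N) (Fin (m + 1)) ℝ) (hVV : Vᵀ * V = 1) (hKV : Kᵀ * V = 0)
    (T : Matrix (Fin (m + 1)) (Fin m) ℝ)
    (hT : (1 - K * Kᵀ) * (B * V.submatrix id Fin.castSucc) = V * T)
    (b : Fin N → ℝ) (ξ : ℝ)
    (hb : (1 - K * Kᵀ) *ᵥ b = ξ • (V *ᵥ Pi.single 0 1)) :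
    sInf (Set.range fun p : (Fin nc → ℝ) × (Fin m → ℝ) =>
        norm2 (b - B *ᵥ (U *ᵥ p.1 + V.submatrix id Fin.castSucc *ᵥ p.2)))
      = sInf (Set.range fun y : Fin m → ℝ =>
          norm2 (ξ • (Pi.single 0 1 : Fin (m + 1) → ℝ) - T *ᵥ y)) ∧
    ∀ ystar : Fin m → ℝ,
      (∀ y : Fin m → ℝ,
          norm2 (ξ • (Pi.single 0 1 : Fin (m + 1) → ℝ) - T *ᵥ ystar)
            ≤ norm2 (ξ • (Pi.single 0 1 : Fin (m + 1) → ℝ) - T *ᵥ y)) →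
      ∀ (z : Fin nc → ℝ) (y : Fin m → ℝ),
        norm2 (b - B *ᵥ (U *ᵥ (Kᵀ *ᵥ b - (Kᵀ * B * V.submatrix id Fin.castSucc) *ᵥ ystar)
            + V.submatrix id Fin.castSucc *ᵥ ystar))
          ≤ norm2 (b - B *ᵥ (U *ᵥ z + V.submatrix id Fin.castSucc *ᵥ y)) := by
  set Vm := V.submatrix id Fin.castSucc with hVm
  set W := Kᵀ * B * Vm with hW
  -- decomposition of the residual
  have decomp : ∀ (z : Fin nc → ℝ) (y : Fin m → ℝ),
      b - B *ᵥ (U *ᵥ z + Vm *ᵥ y)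
        = K *ᵥ (Kᵀ *ᵥ b - z - W *ᵥ y)
          + V *ᵥ (ξ • (Pi.single 0 1 : Fin (m+1) → ℝ) - T *ᵥ y) := by
    intro z y
    have h1 : B * Vm = K * (Kᵀ * B * Vm) + V * T := by
      rw [← hT, Matrix.sub_mul, Matrix.one_mul,
        show K * (Kᵀ * B * Vm) = K * Kᵀ * (B * Vm) by simp only [Matrix.mul_assoc]]
      abel
    have h3 : (K * Kᵀ) *ᵥ b = b - ξ • (V *ᵥ Pi.single 0 1) := by
      rw [← hb]
      simp only [Matrix.sub_mulVec, Matrix.one_mulVec]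
      abel
    simp only [hW, Matrix.mulVec_add, Matrix.mulVec_sub, Matrix.mulVec_smul,
      Matrix.mulVec_mulVec, Matrix.add_mulVec, hBU, h1, h3]
    abel
  -- norm of the decomposed residual
  have hnorm : ∀ (u : Fin nc → ℝ) (w : Fin (m+1) → ℝ),
      norm2 (K *ᵥ u + V *ᵥ w) = Real.sqrt (u ⬝ᵥ u + w ⬝ᵥ w) := by
    intro u w
    rw [norm2, dot_sum K V hKK hVV hKV]
  -- the key inequality
  have hineq : ∀ (z : Fin nc → ℝ) (y : Fin m → ℝ),
      norm2 (ξ • (Pi.single 0 1 : Fin (m + 1) → ℝ) - T *ᵥ y)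
        ≤ norm2 (b - B *ᵥ (U *ᵥ z + Vm *ᵥ y)) := by
    intro z y
    rw [decomp z y, hnorm]
    exact Real.sqrt_le_sqrt (le_add_of_nonneg_left (dot_self_nonneg' _))
  -- equality at the optimal z
  have heq : ∀ y : Fin m → ℝ,
      norm2 (b - B *ᵥ (U *ᵥ (Kᵀ *ᵥ b - W *ᵥ y) + Vm *ᵥ y))
        = norm2 (ξ • (Pi.single 0 1 : Fin (m + 1) → ℝ) - T *ᵥ y) := by
    intro y
    rw [decomp (Kᵀ *ᵥ b - W *ᵥ y) y]
    have : Kᵀ *ᵥ b - (Kᵀ *ᵥ b - W *ᵥ y) - W *ᵥ y = 0 := by abel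
    rw [this, hnorm, norm2]
    simp
  constructor
  · -- equality of infima
    have hbdd1 : BddBelow (Set.range fun p : (Fin nc → ℝ) × (Fin m → ℝ) =>
        norm2 (b - B *ᵥ (U *ᵥ p.1 + Vm *ᵥ p.2))) :=
      ⟨0, by rintro x ⟨p, rfl⟩; exact norm2_nonneg _⟩
    have hbdd2 : BddBelow (Set.range fun y : Fin m → ℝ =>
        norm2 (ξ • (Pi.single 0 1 : Fin (m + 1) → ℝ) - T *ᵥ y)) :=
      ⟨0, by rintro x ⟨y, rfl⟩; exact norm2_nonneg _⟩
    apply le_antisymm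
    · apply csInf_le_csInf hbdd1 ⟨_, Set.mem_range_self (0 : Fin m → ℝ)⟩
      rintro x ⟨y, rfl⟩
      exact ⟨(Kᵀ *ᵥ b - W *ᵥ y, y), heq y⟩
    · apply le_csInf ⟨_, Set.mem_range_self ((0 : Fin nc → ℝ), (0 : Fin m → ℝ))⟩
      rintro x ⟨⟨z, y⟩, rfl⟩
      exact (csInf_le hbdd2 (Set.mem_range_self y)).trans (hineq z y)
  · intro ystar hopt z y
    calc norm2 (b - B *ᵥ (U *ᵥ (Kᵀ *ᵥ b - W *ᵥ ystar) + Vm *ᵥ ystar))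
        = norm2 (ξ • (Pi.single 0 1 : Fin (m + 1) → ℝ) - T *ᵥ ystar) := heq ystar
      _ ≤ norm2 (ξ • (Pi.single 0 1 : Fin (m + 1) → ℝ) - T *ᵥ y) := hopt y
      _ ≤ norm2 (b - B *ᵥ (U *ᵥ z + Vm *ᵥ y)) := hineq z y
end

section
/- Let K and Y be real N×n matrices with KᵀK = I and YᵀY = I, let b ∈ ℝᴺ, and suppose Yᵀ K = Φ Ω Ψᵀ with Φ, Ψ real orthogonal n×n matrices and Ω = diag(ω₁,…,ω_n) invertible (all ω_j ≠ 0). Then Kᵀ Y is invertible, and with q₁ = Yᵀ b (orthogonal projection) and q₂ = (Kᵀ Y)⁻¹ Kᵀ b (oblique projection), one has q₂ − q₁ = Φ Ω⁻¹ ((I − Y Yᵀ) K Ψ)ᵀ b. -/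
open Matrix

/-- If YᵀK = ΦΩΨᵀ is an SVD with Ω invertible, then KᵀY is invertible, and the
oblique coefficients q₂ = (KᵀY)⁻¹Kᵀb and orthogonal coefficients q₁ = Yᵀb satisfy
q₂ − q₁ = ΦΩ⁻¹((I − YYᵀ)KΨ)ᵀ b. -/
theorem stmt_16 (N n : ℕ) (hN : 0 < N) (hn : 0 < n) (hnN : n ≤ N)
    (K Y : Matrix (Fin N) (Fin n) ℝ) (hKK : Kᵀ * K = 1) (hYY : Yᵀ * Y = 1)
    (b : Fin N → ℝ)
    (Φ Ψ : Matrix (Fin n) (Fin n) ℝ) (ω : Fin n → ℝ)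
    (hΦ : Φᵀ * Φ = 1) (hΦ' : Φ * Φᵀ = 1) (hΨ : Ψᵀ * Ψ = 1) (hΨ' : Ψ * Ψᵀ = 1)
    (hSVD : Yᵀ * K = Φ * Matrix.diagonal ω * Ψᵀ) (hω : ∀ j, ω j ≠ 0) :
    IsUnit (Kᵀ * Y) ∧
      (Kᵀ * Y)⁻¹ *ᵥ (Kᵀ *ᵥ b) - Yᵀ *ᵥ b
        = Φ *ᵥ ((Matrix.diagonal ω)⁻¹ *ᵥ (((1 - Y * Yᵀ) * K * Ψ)ᵀ *ᵥ b)) := by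
  set D := Matrix.diagonal ω with hD
  have hdet : D.det ≠ 0 := by
    rw [hD, Matrix.det_diagonal]
    exact Finset.prod_ne_zero_iff.mpr fun j _ => hω j
  have hDinv : D * D⁻¹ = 1 := Matrix.mul_nonsing_inv _ (hdet.isUnit)
  have hDinv' : D⁻¹ * D = 1 := Matrix.nonsing_inv_mul _ (hdet.isUnit)
  have hKY : Kᵀ * Y = Ψ * D * Φᵀ := by
    have h := congrArg Matrix.transpose hSVD
    simpa [hD, Matrix.transpose_mul, Matrix.diagonal_transpose, Matrix.mul_assoc] using h
  have hright : (Kᵀ * Y) * (Φ * D⁻¹ * Ψᵀ) = 1 := by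
    rw [hKY]
    calc Ψ * D * Φᵀ * (Φ * D⁻¹ * Ψᵀ)
        = Ψ * (D * ((Φᵀ * Φ) * (D⁻¹ * Ψᵀ))) := by
          simp only [Matrix.mul_assoc]
      _ = 1 := by
          rw [hΦ, one_mul, ← Matrix.mul_assoc D, hDinv, one_mul, hΨ']
  have hunit : IsUnit (Kᵀ * Y) :=
    ⟨⟨_, _, hright, mul_eq_one_comm.mp hright⟩, rfl⟩
  have hinv : (Kᵀ * Y)⁻¹ = Φ * D⁻¹ * Ψᵀ := Matrix.inv_eq_right_inv hright
  refine ⟨hunit, ?_⟩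
  have key : (Kᵀ * Y)⁻¹ * Kᵀ - Yᵀ = Φ * (D⁻¹ * ((1 - Y * Yᵀ) * K * Ψ)ᵀ) := by
    rw [hinv]
    have hexp : ((1 - Y * Yᵀ) * K * Ψ)ᵀ = Ψᵀ * Kᵀ - Ψᵀ * (Kᵀ * (Y * Yᵀ)) := by
      simp [Matrix.transpose_mul, Matrix.sub_mul, Matrix.mul_sub, Matrix.mul_assoc]
    rw [hexp, Matrix.mul_sub, Matrix.mul_sub]
    have h3 : Φ * (D⁻¹ * (Ψᵀ * (Kᵀ * (Y * Yᵀ)))) = Yᵀ := by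
      have h2 : Ψᵀ * (Kᵀ * (Y * Yᵀ)) = D * (Φᵀ * Yᵀ) := by
        rw [← Matrix.mul_assoc Kᵀ, hKY]
        simp only [Matrix.mul_assoc, ← Matrix.mul_assoc Ψᵀ Ψ, hΨ, one_mul, Matrix.one_mul]
      rw [h2, ← Matrix.mul_assoc D⁻¹, hDinv', Matrix.one_mul, ← Matrix.mul_assoc, hΦ', Matrix.one_mul]
    rw [h3]
    simp only [Matrix.mul_assoc]
  rw [Matrix.mulVec_mulVec, Matrix.mulVec_mulVec, Matrix.mulVec_mulVec,
    ← Matrix.sub_mulVec, key]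
  simp only [Matrix.mul_assoc]
end
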